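/- arXiv:1305.3974 — 2 statements merged into one kernel-verified Lean document; each statement's English description precedes it below -/
import Mathlib

section
/- Assume hypotheses (H1)–(H3) for a smooth Hamiltonian H on the slow–fast phase space M = ℝ^{2r} × ℝ^{2k}, with momentum map J satisfying ⟨d₁J⟩ = 0. If m ∈ M is a point where ⟨d₁H⟩_m ≠ 0 and (d₀H)_m ≠ 0, then the differentials dH_m and dJ_m are linearly independent elements of (ℝ^{2r+2k})^*. -/
open Real MeasureTheory Asymptotics Set

noncomputable section

/-- Fast factor `ℝ^{2r}` with variables `(y, x)`. -/
abbrev Fast (r : ℕ) := (Fin r → ℝ) × (Fin r → ℝ)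

/-- Slow factor `ℝ^{2k}` with variables `(p, q)`. -/
abbrev Slow (k : ℕ) := (Fin k → ℝ) × (Fin k → ℝ)

/-- The slow-fast phase space `M = ℝ^{2r} × ℝ^{2k}`. -/
abbrev SF (r k : ℕ) := Fast r × Slow k

/-- The fast Hamiltonian vector field `X_H^{(0)}`: `ẏ = -∂H/∂x`, `ẋ = ∂H/∂y`,
zero slow components. -/
def fastVF {r k : ℕ} (H : SF r k → ℝ) (m : SF r k) : SF r k :=
  ((fun i => -(fderiv ℝ H m ((0, Pi.single i 1), 0)),
    fun i => fderiv ℝ H m ((Pi.single i 1, 0), 0)), 0)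

/-- The slow Hamiltonian vector field `X_H^{(1)}`: `ṗ = -∂H/∂q`, `q̇ = ∂H/∂p`,
zero fast components. -/
def slowVF {r k : ℕ} (H : SF r k → ℝ) (m : SF r k) : SF r k :=
  (0, (fun j => -(fderiv ℝ H m (0, (0, Pi.single j 1))),
       fun j => fderiv ℝ H m (0, (Pi.single j 1, 0))))

/-- The differential of `f` in the slow variables only, `d₁f`, as a 1-form. -/
def d1Form {r k : ℕ} (f : SF r k → ℝ) (m w : SF r k) : ℝ :=
  fderiv ℝ f m ((0 : Fast r), w.2)

/-- Average `⟨α⟩` of a 1-form `α` along a `2π`-periodic flow `φ`: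
`⟨α⟩_m(w) = (1/2π)∫₀^{2π} α_{φ(t,m)}(D_mφ(t,·) w) dt`. -/
def avg1 {r k : ℕ} (φ : ℝ → SF r k → SF r k) (α : SF r k → SF r k → ℝ)
    (m w : SF r k) : ℝ :=
  (1 / (2 * π)) * ∫ t in (0:ℝ)..(2 * π), α (φ t m) (fderiv ℝ (φ t) m w)

/-- Integrating operator `S(α)` on a 1-form `α` along a `2π`-periodic flow `φ`. -/
def intOp1 {r k : ℕ} (φ : ℝ → SF r k → SF r k) (α : SF r k → SF r k → ℝ)
    (m w : SF r k) : ℝ :=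
  (1 / (2 * π)) * ∫ t in (0:ℝ)..(2 * π), (t - π) * α (φ t m) (fderiv ℝ (φ t) m w)

/-! The first integrals of the fast flow `Υ = ω⁻¹ X_H^{(0)}` are `H`, `J` and the slow variables,
so every time-`t` map `φ_t` preserves `dH`, `dJ` and the slow component of tangent vectors. In
particular the factor `1/ω` in `d₀J = (1/ω) d₀H` is constant along the orbit of `m` as soon as
`(d₀H)_m ≠ 0`. A relation `a dH_m + b dJ_m = 0` then forces `a + b/ω(m) = 0` on fast vectors, and
transported by `φ_t` and restricted to slow vectors it becomes `a φ_t^*d₁H + b φ_t^*d₁J = 0`.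
Averaging over `t` gives `a ⟨d₁H⟩_m = -b ⟨d₁J⟩_m = 0`, so `a = 0`, and then `b = 0`. -/

theorem comp_eq_of_hasDerivAt_of_fderiv_apply_eq_zero {E F : Type*}
    [NormedAddCommGroup E] [NormedSpace ℝ E] [NormedAddCommGroup F] [NormedSpace ℝ F]
    {Y : E → E} {γ : ℝ → E} (hγ : ∀ t, HasDerivAt γ (Y (γ t)) t)
    {f : E → F} (hf : Differentiable ℝ f) (hfY : ∀ x, fderiv ℝ f x (Y x) = 0) (t : ℝ) :
    f (γ t) = f (γ 0) := by
  have hderiv : ∀ s, HasDerivAt (f ∘ γ) 0 s := fun s => by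
    simpa [hfY] using (hf (γ s)).hasFDerivAt.comp_hasDerivAt s (hγ s)
  exact is_const_of_deriv_eq_zero (fun s => (hderiv s).differentiableAt)
    (fun s => (hderiv s).deriv) t 0

theorem fderiv_comp_apply_of_comp_eq {E F : Type*}
    [NormedAddCommGroup E] [NormedSpace ℝ E] [NormedAddCommGroup F] [NormedSpace ℝ F]
    {f : E → F} {g : E → E} {x : E} (hf : DifferentiableAt ℝ f (g x))
    (hg : DifferentiableAt ℝ g x) (hfg : f ∘ g = f) (v : E) :
    fderiv ℝ f (g x) (fderiv ℝ g x v) = fderiv ℝ f x v := by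
  conv_rhs => rw [← hfg, fderiv_comp x hf hg, ContinuousLinearMap.comp_apply]

section LinearAlgebra

variable {r k : ℕ}

theorem apply_fast_eq_sum (L : SF r k →L[ℝ] ℝ) (a b : Fin r → ℝ) :
    L ((a, b), 0) = ∑ i, a i * L ((Pi.single i 1, 0), 0)
      + ∑ i, b i * L ((0, Pi.single i 1), 0) := by
  have hsum : ((a, b), (0 : Slow k)) =
      (∑ i, a i • ((((Pi.single i 1 : Fin r → ℝ), 0), (0 : Slow k)) : SF r k))
      + ∑ i, b i • ((((0 : Fin r → ℝ), Pi.single i 1), (0 : Slow k)) : SF r k) := by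
    ext x <;>
      simp [Prod.fst_sum, Prod.snd_sum, Finset.sum_apply, Pi.single_apply]
  simp only [hsum, map_add, map_sum, map_smul, smul_eq_mul]

/-- In coordinates this is `∑ᵢ (-∂H/∂xᵢ ∂H/∂yᵢ + ∂H/∂yᵢ ∂H/∂xᵢ) = 0`. -/
theorem fderiv_apply_fastVF_self (H : SF r k → ℝ) (n : SF r k) :
    fderiv ℝ H n (fastVF H n) = 0 := by
  rw [fastVF, apply_fast_eq_sum, ← Finset.sum_add_distrib]
  exact Finset.sum_eq_zero fun i _ => by ring

theorem fderiv_apply_fastVF_eq_zero (H f : SF r k → ℝ) (n : SF r k) (c : ℝ)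
    (hfast : ∀ u : Fast r, fderiv ℝ f n (u, 0) = c * fderiv ℝ H n (u, 0)) :
    fderiv ℝ f n (fastVF H n) = 0 := by
  have hfastVF : fastVF H n = ((fastVF H n).1, 0) := rfl
  rw [hfastVF, hfast, ← hfastVF, fderiv_apply_fastVF_self, mul_zero]

theorem fast_factor_eq_of_comp (D : SF r k →L[ℝ] SF r k) (hD : ∀ v, (D v).2 = v.2)
    {LH LJ LH' LJ' : SF r k →L[ℝ] ℝ} (hH : ∀ v, LH' (D v) = LH v) (hJ : ∀ v, LJ' (D v) = LJ v)
    {c c' : ℝ} (hc : ∀ u : Fast r, LJ (u, 0) = c * LH (u, 0))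
    (hc' : ∀ u : Fast r, LJ' (u, 0) = c' * LH' (u, 0)) {u : Fast r} (hu : LH (u, 0) ≠ 0) :
    c' = c := by
  set v := D (u, 0)
  have hv : v = (v.1, 0) := Prod.ext rfl (hD _)
  refine mul_right_cancel₀ hu ?_
  calc c' * LH (u, 0) = c' * LH' (v.1, 0) := by rw [← hv, hH]
    _ = LJ (u, 0) := by rw [← hc', ← hv, hJ]
    _ = c * LH (u, 0) := hc u

theorem combination_apply_slow (LH LJ : SF r k →L[ℝ] ℝ) {c : ℝ}
    (hc : ∀ u : Fast r, LJ (u, 0) = c * LH (u, 0)) {a b : ℝ} (hab : a + b * c = 0)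
    (x : SF r k) : a * LH (0, x.2) + b * LJ (0, x.2) = a * LH x + b * LJ x := by
  have hsplit : ∀ L : SF r k →L[ℝ] ℝ, L x = L (x.1, 0) + L (0, x.2) := fun L => by
    rw [← map_add, Prod.mk_add_mk, add_zero, zero_add]
  linear_combination -a * hsplit LH - b * hsplit LJ - b * hc x.1 - LH (x.1, 0) * hab

end LinearAlgebra

section Flow

variable {r k : ℕ} {H ω : SF r k → ℝ} {φ : ℝ → SF r k → SF r k}

theorem comp_flow_eq {F : Type*} [NormedAddCommGroup F] [NormedSpace ℝ F]
    (hφ0 : ∀ m, φ 0 m = m)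
    (hφ' : ∀ t m, HasDerivAt (fun s => φ s m) ((ω (φ t m))⁻¹ • fastVF H (φ t m)) t)
    {f : SF r k → F} (hf : Differentiable ℝ f) (hfX : ∀ n, fderiv ℝ f n (fastVF H n) = 0)
    (t : ℝ) : f ∘ φ t = f := by
  funext x
  simpa [hφ0] using comp_eq_of_hasDerivAt_of_fderiv_apply_eq_zero
    (Y := fun n => (ω n)⁻¹ • fastVF H n) (γ := fun s => φ s x) (hφ' · x) hf
    (fun n => by rw [map_smul, hfX, smul_zero]) t

theorem fderiv_apply_fderiv_flow {F : Type*} [NormedAddCommGroup F] [NormedSpace ℝ F]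
    (hφ0 : ∀ m, φ 0 m = m)
    (hφ' : ∀ t m, HasDerivAt (fun s => φ s m) ((ω (φ t m))⁻¹ • fastVF H (φ t m)) t)
    {f : SF r k → F} (hf : Differentiable ℝ f) (hfX : ∀ n, fderiv ℝ f n (fastVF H n) = 0)
    {t : ℝ} {m : SF r k} (hφd : DifferentiableAt ℝ (φ t) m) (v : SF r k) :
    fderiv ℝ f (φ t m) (fderiv ℝ (φ t) m v) = fderiv ℝ f m v :=
  fderiv_comp_apply_of_comp_eq (hf _) hφd (comp_flow_eq hφ0 hφ' hf hfX t) v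

theorem fderiv_flow_apply_snd (hφ0 : ∀ m, φ 0 m = m)
    (hφ' : ∀ t m, HasDerivAt (fun s => φ s m) ((ω (φ t m))⁻¹ • fastVF H (φ t m)) t)
    {t : ℝ} {m : SF r k} (hφd : DifferentiableAt ℝ (φ t) m) (v : SF r k) :
    (fderiv ℝ (φ t) m v).2 = v.2 := by
  simpa only [fderiv_snd, ContinuousLinearMap.coe_snd'] using
    fderiv_apply_fderiv_flow hφ0 hφ' differentiable_snd (fun n => by rw [fderiv_snd]; rfl) hφd v

end Flow

theorem mul_avg1_eq_zero {r k : ℕ} {φ : ℝ → SF r k → SF r k} {α β : SF r k → SF r k → ℝ}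
    {m w : SF r k} {a b : ℝ}
    (h : ∀ t, a * α (φ t m) (fderiv ℝ (φ t) m w) + b * β (φ t m) (fderiv ℝ (φ t) m w) = 0)
    (hβ : avg1 φ β m w = 0) : a * avg1 φ α m w = 0 := by
  have hint : (∫ t in (0:ℝ)..(2 * π), a * α (φ t m) (fderiv ℝ (φ t) m w))
      = ∫ t in (0:ℝ)..(2 * π), -b * β (φ t m) (fderiv ℝ (φ t) m w) :=
    intervalIntegral.integral_congr fun t _ => by linear_combination h t
  rw [intervalIntegral.integral_const_mul, intervalIntegral.integral_const_mul] at hint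
  unfold avg1 at hβ ⊢
  linear_combination 1 / (2 * π) * hint - b * hβ

theorem stmt7_general {r k : ℕ} (H : SF r k → ℝ) (hH : ContDiff ℝ (⊤ : ℕ∞) H)
    (ω : SF r k → ℝ) (hω_pos : ∀ m, 0 < ω m)
    (φ : ℝ → SF r k → SF r k)
    (hφ_smooth : ContDiff ℝ (⊤ : ℕ∞) (fun p : ℝ × SF r k => φ p.1 p.2))
    (hφ0 : ∀ m, φ 0 m = m)
    (hφ' : ∀ t m, HasDerivAt (fun s => φ s m) ((ω (φ t m))⁻¹ • fastVF H (φ t m)) t)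
    (J : SF r k → ℝ) (hJ_smooth : ContDiff ℝ (⊤ : ℕ∞) J)
    (hH2 : ∀ m (u : Fast r),
      fderiv ℝ J m (u, (0 : Slow k)) = (1 / ω m) * fderiv ℝ H m (u, 0))
    (hH3 : ∀ m w, avg1 φ (d1Form J) m w = 0)
    (m : SF r k)
    (h1 : ∃ w, avg1 φ (d1Form H) m w ≠ 0)
    (h0 : ∃ u : Fast r, fderiv ℝ H m (u, (0 : Slow k)) ≠ 0) :
    ∀ a b : ℝ, (∀ v : SF r k, a * fderiv ℝ H m v + b * fderiv ℝ J m v = 0) →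
      a = 0 ∧ b = 0 := by
  intro a b hab
  obtain ⟨w, hw⟩ := h1
  obtain ⟨u, hu⟩ := h0
  have hHd : Differentiable ℝ H := hH.differentiable (by simp)
  have hJd : Differentiable ℝ J := hJ_smooth.differentiable (by simp)
  have hφd : ∀ t, Differentiable ℝ (φ t) := fun t =>
    (hφ_smooth.differentiable (by simp)).comp ((differentiable_const t).prodMk differentiable_id)
  have hJfast : ∀ n (u : Fast r), fderiv ℝ J n (u, 0) = (ω n)⁻¹ * fderiv ℝ H n (u, 0) := by
    simpa only [one_div] using hH2
  have hH_pull : ∀ t v, fderiv ℝ H (φ t m) (fderiv ℝ (φ t) m v) = fderiv ℝ H m v := fun t =>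
    fderiv_apply_fderiv_flow hφ0 hφ' hHd (fderiv_apply_fastVF_self H) (hφd t m)
  have hJ_pull : ∀ t v, fderiv ℝ J (φ t m) (fderiv ℝ (φ t) m v) = fderiv ℝ J m v := fun t =>
    fderiv_apply_fderiv_flow hφ0 hφ' hJd
      (fun n => fderiv_apply_fastVF_eq_zero H J n _ (hJfast n)) (hφd t m)
  have hfactor : ∀ t, (ω (φ t m))⁻¹ = (ω m)⁻¹ := fun t =>
    fast_factor_eq_of_comp _ (fderiv_flow_apply_snd hφ0 hφ' (hφd t m)) (hH_pull t) (hJ_pull t)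
      (hJfast m) (hJfast _) hu
  have hab_fast : a + b * (ω m)⁻¹ = 0 := by
    refine (mul_eq_zero.mp (?_ : (a + b * (ω m)⁻¹) * fderiv ℝ H m (u, 0) = 0)).resolve_right hu
    linear_combination hab (u, 0) - b * hJfast m u
  have hab_slow : ∀ t, a * d1Form H (φ t m) (fderiv ℝ (φ t) m w)
      + b * d1Form J (φ t m) (fderiv ℝ (φ t) m w) = 0 := fun t => by
    rw [d1Form, d1Form, combination_apply_slow _ _ (hJfast (φ t m)) (by rwa [hfactor]),
      hH_pull, hJ_pull, hab]
  have ha : a = 0 := (mul_eq_zero.mp (mul_avg1_eq_zero hab_slow (hH3 m w))).resolve_right hw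
  subst ha
  simpa [(hω_pos m).ne'] using hab_fast

/-- Under hypotheses (H1)-(H3), at any point `m` where `⟨d₁H⟩_m ≠ 0`
and `(d₀H)_m ≠ 0`, the differentials `dH_m` and `dJ_m` are linearly independent. -/
theorem stmt7 {r k : ℕ} (H : SF r k → ℝ) (hH : ContDiff ℝ (⊤ : ℕ∞) H)
    (ω : SF r k → ℝ) (hω_smooth : ContDiff ℝ (⊤ : ℕ∞) ω) (hω_pos : ∀ m, 0 < ω m)
    (φ : ℝ → SF r k → SF r k)
    (hφ_smooth : ContDiff ℝ (⊤ : ℕ∞) (fun p : ℝ × SF r k => φ p.1 p.2))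
    (hφ0 : ∀ m, φ 0 m = m)
    (hφ' : ∀ t m, HasDerivAt (fun s => φ s m) ((ω (φ t m))⁻¹ • fastVF H (φ t m)) t)
    (hper : ∀ t m, φ (t + 2 * π) m = φ t m)
    (J : SF r k → ℝ) (hJ_smooth : ContDiff ℝ (⊤ : ℕ∞) J)
    (hH2 : ∀ m (u : Fast r),
      fderiv ℝ J m (u, (0 : Slow k)) = (1 / ω m) * fderiv ℝ H m (u, 0))
    (hH3 : ∀ m w, avg1 φ (d1Form J) m w = 0)
    (m : SF r k)
    (h1 : ∃ w, avg1 φ (d1Form H) m w ≠ 0)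
    (h0 : ∃ u : Fast r, fderiv ℝ H m (u, (0 : Slow k)) ≠ 0) :
    ∀ a b : ℝ, (∀ v : SF r k, a * fderiv ℝ H m v + b * fderiv ℝ J m v = 0) →
      a = 0 ∧ b = 0 :=
  stmt7_general H hH ω hω_pos φ hφ_smooth hφ0 hφ' J hJ_smooth hH2 hH3 m h1 h0
end
end

section
/- Assume hypotheses (H1)–(H3) for a smooth Hamiltonian H on the slow–fast phase space M = ℝ^{2r} × ℝ^{2k}, with momentum map J satisfying ⟨d₁J⟩ = 0, and set Θ := S(d₁J). Then for every ε ≠ 0 the average of the singular symplectic form σ_ε along the flow φ satisfies ⟨σ_ε⟩ = σ_ε − dΘ. -/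
open Real MeasureTheory Asymptotics Set

noncomputable section

/-- The canonical fast symplectic form `σ₀((u_y,u_x),(v_y,v_x)) = u_y·v_x − u_x·v_y`. -/
def sigma0 {r : ℕ} (u v : Fast r) : ℝ :=
  ∑ i : Fin r, u.1 i * v.2 i - ∑ i : Fin r, u.2 i * v.1 i

/-- The canonical slow symplectic form `σ₁((u_p,u_q),(v_p,v_q)) = u_p·v_q − u_q·v_p`. -/
def sigma1 {k : ℕ} (u v : Slow k) : ℝ :=
  ∑ j : Fin k, u.1 j * v.2 j - ∑ j : Fin k, u.2 j * v.1 j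

/-- The singular symplectic form `σ_ε = π₀^*σ₀ + (1/ε) π₁^*σ₁` on `M`. -/
def sigmaE {r k : ℕ} (ε : ℝ) (u v : SF r k) : ℝ :=
  sigma0 u.1 v.1 + (1 / ε) * sigma1 u.2 v.2

/-- The average of a 2-form `β` along a `2π`-periodic flow `φ`:
`⟨β⟩_m(u,v) = (1/2π)∫₀^{2π} β_{φ(t,m)}(D_mφ(t,·)u, D_mφ(t,·)v) dt`. -/
def avg2 {r k : ℕ} (φ : ℝ → SF r k → SF r k) (β : SF r k → SF r k → SF r k → ℝ)
    (m u v : SF r k) : ℝ :=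
  (1 / (2 * π)) *
    ∫ t in (0:ℝ)..(2 * π), β (φ t m) (fderiv ℝ (φ t) m u) (fderiv ℝ (φ t) m v)

/-- The differential of `f` in the slow variables, as a continuous linear map. -/
def d1FormL {r k : ℕ} (f : SF r k → ℝ) (m : SF r k) : SF r k →L[ℝ] ℝ :=
  (fderiv ℝ f m).comp
    ((ContinuousLinearMap.inr ℝ (Fast r) (Slow k)).comp
      (ContinuousLinearMap.snd ℝ (Fast r) (Slow k)))

/-- The Hannay-Berry 1-form `Θ = S(d₁J)`, as a map `M → M^*`:
`Θ_m = (1/2π)∫₀^{2π} (t−π) (φ_t)^*(d₁J)_m dt`. -/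
def ThetaL {r k : ℕ} (φ : ℝ → SF r k → SF r k) (J : SF r k → ℝ) (m : SF r k) :
    SF r k →L[ℝ] ℝ :=
  (1 / (2 * π)) •
    ∫ t in (0:ℝ)..(2 * π), (t - π) • ((d1FormL J (φ t m)).comp (fderiv ℝ (φ t) m))

/-!
The slow variables are first integrals of the flow, so `(φ_t)^* d₁J = d₁J ∘ φ_t` and
`dΘ(u, v) = (1/2π) ∫ (t - π) (D²J(Dφ_t u, v_slow) - D²J(Dφ_t v, u_slow)) dt`.
By (H2), `φ` is the flow of `X_J^{(0)}`, and the variational equation shows that the same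
integrand without the weight `t - π` is the time derivative of `σ_ε(Dφ_t u, Dφ_t v)`.
Integrating by parts against `t - π` over a period, at whose ends `φ_t = id`, gives the claim.
-/

section FlowCalculus

variable {E : Type*} [NormedAddCommGroup E] [NormedSpace ℝ E] {φ : ℝ → E → E}

theorem fderiv_apply_eq_fderiv_uncurry (hφ : Differentiable ℝ (fun p : ℝ × E => φ p.1 p.2))
    (t : ℝ) (m w : E) :
    fderiv ℝ (φ t) m w = fderiv ℝ (fun p : ℝ × E => φ p.1 p.2) (t, m) (0, w) := by
  have h : HasFDerivAt (φ t) ((fderiv ℝ (fun p : ℝ × E => φ p.1 p.2) (t, m)).comp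
      ((0 : E →L[ℝ] ℝ).prod (.id ℝ E))) m :=
    (hφ (t, m)).hasFDerivAt.comp m ((hasFDerivAt_const t m).prodMk (hasFDerivAt_id m))
  rw [h.fderiv]
  simp

theorem fderiv_uncurry_apply_one_zero {X : E → E}
    (hφ : Differentiable ℝ (fun p : ℝ × E => φ p.1 p.2))
    (hφX : ∀ t m, HasDerivAt (fun s => φ s m) (X (φ t m)) t) (t : ℝ) (m : E) :
    fderiv ℝ (fun p : ℝ × E => φ p.1 p.2) (t, m) (1, 0) = X (φ t m) := by
  have h : HasDerivAt (fun s => φ s m) (fderiv ℝ (fun p : ℝ × E => φ p.1 p.2) (t, m) (1, 0)) t := by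
    have := (hφ (t, m)).hasFDerivAt.comp_hasDerivAt t
      ((hasDerivAt_id t).prodMk (hasDerivAt_const t m))
    exact this
  exact h.unique (hφX t m)

/-- The variational equation. Time and space derivatives of the flow commute by symmetry of
the second derivative of `(t, m) ↦ φ t m`. -/
theorem hasDerivAt_fderiv_flow {X : E → E} (hφ : ContDiff ℝ 2 (fun p : ℝ × E => φ p.1 p.2))
    (hX : Differentiable ℝ X) (hφX : ∀ t m, HasDerivAt (fun s => φ s m) (X (φ t m)) t)
    (t : ℝ) (m w : E) :
    HasDerivAt (fun s => fderiv ℝ (φ s) m w) (fderiv ℝ X (φ t m) (fderiv ℝ (φ t) m w)) t := by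
  set Ψ := fun p : ℝ × E => φ p.1 p.2
  have hΨ : Differentiable ℝ Ψ := hφ.differentiable two_ne_zero
  have hDΨ : Differentiable ℝ (fderiv ℝ Ψ) :=
    (hφ.fderiv_right (m := 1) le_rfl).differentiable one_ne_zero
  set W := fderiv ℝ (fderiv ℝ Ψ) (t, m)
  have hW : HasFDerivAt (fderiv ℝ Ψ) W (t, m) := (hDΨ (t, m)).hasFDerivAt
  have hcurve : HasDerivAt (fun s => fderiv ℝ Ψ (s, m) (0, w)) (W (1, 0) (0, w)) t := by
    have h : HasDerivAt (fun s => fderiv ℝ Ψ (s, m)) (W (1, 0)) t :=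
      hW.comp_hasDerivAt t ((hasDerivAt_id t).prodMk (hasDerivAt_const t m))
    simpa using h.clm_apply (hasDerivAt_const t ((0, w) : ℝ × E))
  have hsymm : W (1, 0) (0, w) = W (0, w) (1, 0) :=
    second_derivative_symmetric (fun y => (hΨ y).hasFDerivAt) hW _ _
  have htime : HasFDerivAt (fun p => X (Ψ p)) ((fderiv ℝ X (Ψ (t, m))).comp (fderiv ℝ Ψ (t, m)))
      (t, m) := (hX _).hasFDerivAt.comp (t, m) (hΨ (t, m)).hasFDerivAt
  have htime' : HasFDerivAt (fun p => X (Ψ p))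
      ((ContinuousLinearMap.apply ℝ E ((1 : ℝ), (0 : E))).comp W) (t, m) := by
    have hfun : (fun p => fderiv ℝ Ψ p (1, 0)) = fun p => X (Ψ p) :=
      funext fun p => fderiv_uncurry_apply_one_zero hΨ hφX p.1 p.2
    rw [← hfun]
    exact (ContinuousLinearMap.apply ℝ E ((1 : ℝ), (0 : E))).hasFDerivAt.comp (t, m) hW
  have hW' : W (0, w) (1, 0) = fderiv ℝ X (φ t m) (fderiv ℝ (φ t) m w) := by
    rw [fderiv_apply_eq_fderiv_uncurry hΨ]
    simpa using congrArg (fun L => L (0, w)) (htime'.unique htime)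
  rw [show (fun s => fderiv ℝ (φ s) m w) = fun s => fderiv ℝ Ψ (s, m) (0, w) from
    funext fun s => fderiv_apply_eq_fderiv_uncurry hΨ s m w]
  rwa [hsymm, hW'] at hcurve

end FlowCalculus

theorem continuous_fderiv_of_contDiff_uncurry {E F : Type*} [NormedAddCommGroup E]
    [NormedSpace ℝ E] [NormedAddCommGroup F] [NormedSpace ℝ F]
    {G : ℝ → E → F} (hG : ContDiff ℝ 1 (fun p : ℝ × E => G p.1 p.2)) :
    Continuous (fun p : ℝ × E => fderiv ℝ (G p.1) p.2) :=
  (ContDiff.fderiv (f := fun (p : ℝ × E) (y : E) => G p.1 y)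
    (hG.comp ((contDiff_fst.comp contDiff_fst).prodMk contDiff_snd)) contDiff_snd
    (n := 0) (by norm_num)).continuous

theorem hasFDerivAt_intervalIntegral_of_contDiff {E F : Type*} [NormedAddCommGroup E]
    [NormedSpace ℝ E] [ProperSpace E] [NormedAddCommGroup F] [NormedSpace ℝ F] [CompleteSpace F]
    {G : ℝ → E → F} (hG : ContDiff ℝ 1 (fun p : ℝ × E => G p.1 p.2)) (a b : ℝ) (x : E) :
    HasFDerivAt (fun y => ∫ t in a..b, G t y) (∫ t in a..b, fderiv ℝ (G t) x) x := by
  have hG' := continuous_fderiv_of_contDiff_uncurry hG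
  have hGt : ∀ t, Differentiable ℝ (G t) := fun t =>
    (hG.comp (contDiff_const.prodMk contDiff_id)).differentiable one_ne_zero
  obtain ⟨C, hC⟩ := (isCompact_uIcc.prod (isCompact_closedBall x 1)).exists_bound_of_continuousOn
    hG'.continuousOn
  refine intervalIntegral.hasFDerivAt_integral_of_dominated_of_fderiv_le
    (bound := fun _ => C) (Metric.ball_mem_nhds x one_pos)
    (.of_forall fun y => (hG.continuous.comp (continuous_id.prodMk continuous_const)
      ).aestronglyMeasurable)
    ((hG.continuous.comp (continuous_id.prodMk continuous_const)).intervalIntegrable a b)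
    (hG'.comp (continuous_id.prodMk continuous_const)).aestronglyMeasurable
    (.of_forall fun t ht y hy => hC (t, y) ⟨uIoc_subset_uIcc ht, Metric.ball_subset_closedBall hy⟩)
    intervalIntegrable_const
    (.of_forall fun t _ y _ => (hGt t y).hasFDerivAt)

theorem fderiv_intervalIntegral_apply_of_contDiff {E F : Type*} [NormedAddCommGroup E]
    [NormedSpace ℝ E] [ProperSpace E] [NormedAddCommGroup F] [NormedSpace ℝ F] [CompleteSpace F]
    {G : ℝ → E → F} (hG : ContDiff ℝ 1 (fun p : ℝ × E => G p.1 p.2)) (a b : ℝ) (x w : E) :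
    fderiv ℝ (fun y => ∫ t in a..b, G t y) x w = ∫ t in a..b, fderiv ℝ (G t) x w := by
  have hint : IntervalIntegrable (fun t => fderiv ℝ (G t) x) volume a b :=
    ((continuous_fderiv_of_contDiff_uncurry hG).comp
      (continuous_id.prodMk continuous_const)).intervalIntegrable a b
  rw [(hasFDerivAt_intervalIntegral_of_contDiff hG a b x).fderiv,
    ContinuousLinearMap.intervalIntegral_apply hint]

theorem integral_eq_sub_integral_mul_deriv_of_eq {f g : ℝ → ℝ} {a b : ℝ}
    (hf : ∀ t, HasDerivAt f (g t) t) (hg : Continuous g) (hab : f a = f b) :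
    ∫ t in a..b, f t = (b - a) * f a - ∫ t in a..b, (t - (a + b) / 2) * g t := by
  have h := intervalIntegral.integral_mul_deriv_eq_deriv_mul (fun t _ => hf t)
    (fun t _ => (hasDerivAt_id t).sub_const ((a + b) / 2)) (hg.intervalIntegrable a b)
    intervalIntegrable_const
  simp only [mul_one, id] at h
  rw [h, ← hab]
  simp_rw [mul_comm (g _)]
  ring

section ProductSpace

variable {E F : Type*} [NormedAddCommGroup E] [NormedSpace ℝ E] [NormedAddCommGroup F]
  [NormedSpace ℝ F]

theorem snd_flow_eq {φ : ℝ → E × F → E × F} {V : ℝ → E × F → E × F}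
    (hφ : ∀ t m, HasDerivAt (fun s => φ s m) (V t m) t) (hV : ∀ t m, (V t m).2 = 0)
    (t : ℝ) (m : E × F) : (φ t m).2 = (φ 0 m).2 := by
  have hd : ∀ s, HasDerivAt (fun s => (φ s m).2) 0 s := fun s => by
    simpa [hV, Function.comp_def] using hasFDerivAt_snd.comp_hasDerivAt s (hφ s m)
  exact is_const_of_deriv_eq_zero (fun s => (hd s).differentiableAt) (fun s => (hd s).deriv) t 0

theorem snd_fderiv_eq_of_snd_eq {f : E × F → E × F} (hf : ∀ m, (f m).2 = m.2) {m : E × F}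
    (hfm : DifferentiableAt ℝ f m) (w : E × F) : (fderiv ℝ f m w).2 = w.2 := by
  have h : HasFDerivAt (fun m => (f m).2) ((ContinuousLinearMap.snd ℝ E F).comp (fderiv ℝ f m)) m :=
    hasFDerivAt_snd.comp m hfm.hasFDerivAt
  simp only [hf] at h
  exact congrArg (fun L => L w) (h.unique hasFDerivAt_snd)

theorem apply_fst_sub_apply_fst_of_symm {B : E × F →L[ℝ] E × F →L[ℝ] ℝ} (hB : ∀ a b, B a b = B b a)
    (a b : E × F) :
    B b (a.1, 0) - B a (b.1, 0) = B a (0, b.2) - B b (0, a.2) := by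
  have split : ∀ c d : E × F, B c d = B c (d.1, 0) + B c (0, d.2) := fun c d => by
    rw [← map_add, Prod.mk_add_mk, add_zero, zero_add]
  linarith [split a b, split b a, hB a b]

end ProductSpace

section PhaseSpace

variable {r k : ℕ}

-- `fastVF f x = fastHamVec (fderiv ℝ f x)` holds by `rfl`.
def fastHamVec : (SF r k →L[ℝ] ℝ) →L[ℝ] SF r k :=
  (ContinuousLinearMap.inl ℝ (Fast r) (Slow k)).comp
    ((ContinuousLinearMap.pi fun i =>
        -ContinuousLinearMap.apply ℝ ℝ (((0 : Fin r → ℝ), Pi.single i 1), (0 : Slow k))).prod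
      (ContinuousLinearMap.pi fun i =>
        ContinuousLinearMap.apply ℝ ℝ (((Pi.single i 1 : Fin r → ℝ), 0), (0 : Slow k))))

theorem fast_eq_sum_single (u : Fast r) :
    ((u, 0) : SF r k) = ∑ i, u.1 i • (((Pi.single i 1, 0), 0) : SF r k)
      + ∑ i, u.2 i • (((0, Pi.single i 1), 0) : SF r k) := by
  refine Prod.ext (Prod.ext ?_ ?_) ?_ <;>
    simp [Prod.fst_sum, Prod.snd_sum, Finset.sum_apply, Pi.single_apply, funext_iff]

theorem sigma0_fastHamVec (u : Fast r) (L : SF r k →L[ℝ] ℝ) :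
    sigma0 u (fastHamVec L).1 = L (u, 0) := by
  rw [fast_eq_sum_single u]
  simp only [map_add, map_sum, _root_.map_smul, smul_eq_mul]
  simp [sigma0, fastHamVec]

theorem sigma0_comm (u v : Fast r) : sigma0 u v = -sigma0 v u := by
  simp only [sigma0, mul_comm (u.1 _), mul_comm (u.2 _)]
  ring

theorem HasDerivAt.sigma0 {a b : ℝ → SF r k} {a' b' : SF r k} {t : ℝ}
    (ha : HasDerivAt a a' t) (hb : HasDerivAt b b' t) :
    HasDerivAt (fun s => sigma0 (a s).1 (b s).1) (sigma0 a'.1 (b t).1 + sigma0 (a t).1 b'.1) t := by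
  have coord : ∀ {c : ℝ → SF r k} {c'} (hc : HasDerivAt c c' t) (i : Fin r),
      HasDerivAt (fun s => (c s).1.1 i) (c'.1.1 i) t ∧
        HasDerivAt (fun s => (c s).1.2 i) (c'.1.2 i) t :=
    fun hc i => ⟨(((ContinuousLinearMap.proj i).comp ((ContinuousLinearMap.fst ℝ _ _).comp
      (ContinuousLinearMap.fst ℝ _ _))).hasFDerivAt.comp_hasDerivAt t hc :),
      (((ContinuousLinearMap.proj i).comp ((ContinuousLinearMap.snd ℝ _ _).comp
      (ContinuousLinearMap.fst ℝ _ _))).hasFDerivAt.comp_hasDerivAt t hc :)⟩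
  have h : HasDerivAt (fun s => _root_.sigma0 (a s).1 (b s).1)
      (∑ i, (a'.1.1 i * (b t).1.2 i + (a t).1.1 i * b'.1.2 i)
        - ∑ i, (a'.1.2 i * (b t).1.1 i + (a t).1.2 i * b'.1.1 i)) t :=
    (HasDerivAt.fun_sum (u := Finset.univ) fun i _ => (coord ha i).1.mul (coord hb i).2).sub
      (HasDerivAt.fun_sum (u := Finset.univ) fun i _ => (coord ha i).2.mul (coord hb i).1)
  convert h using 1
  simp only [_root_.sigma0, Finset.sum_add_distrib]
  ring

end PhaseSpace

section SlowFastFlow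

variable {r k : ℕ} {φ : ℝ → SF r k → SF r k} {J : SF r k → ℝ}

theorem inv_smul_fastVF_eq_fastVF {H ω : SF r k → ℝ}
    (hH2 : ∀ m (u : Fast r), fderiv ℝ J m (u, (0 : Slow k)) = (1 / ω m) * fderiv ℝ H m (u, 0))
    (x : SF r k) : (ω x)⁻¹ • fastVF H x = fastVF J x := by
  refine Prod.ext (Prod.ext ?_ ?_) (by simp [fastVF]) <;> funext i <;> simp [fastVF, hH2]

theorem hasFDerivAt_fastVF (hJ : ContDiff ℝ 2 J) (x : SF r k) :
    HasFDerivAt (fastVF J) (fastHamVec.comp (fderiv ℝ (fderiv ℝ J) x)) x :=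
  fastHamVec.hasFDerivAt.comp x
    (((hJ.fderiv_right (m := 1) le_rfl).differentiable one_ne_zero) x).hasFDerivAt

theorem snd_fderiv_flow (hφ : Differentiable ℝ (fun p : ℝ × SF r k => φ p.1 p.2))
    (hφ0 : ∀ m, φ 0 m = m) (hflow : ∀ t m, HasDerivAt (fun s => φ s m) (fastVF J (φ t m)) t)
    (t : ℝ) (m w : SF r k) : (fderiv ℝ (φ t) m w).2 = w.2 := by
  refine snd_fderiv_eq_of_snd_eq (fun m => ?_) ?_ w
  · rw [snd_flow_eq hflow (fun _ _ => rfl) t m, hφ0]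
  · exact (hφ (t, m)).comp m ((differentiableAt_const t).prodMk differentiableAt_id)

theorem hasDerivAt_sigmaE_fderiv_flow (hφ : ContDiff ℝ 2 (fun p : ℝ × SF r k => φ p.1 p.2))
    (hJ : ContDiff ℝ 2 J) (hφ0 : ∀ m, φ 0 m = m)
    (hflow : ∀ t m, HasDerivAt (fun s => φ s m) (fastVF J (φ t m)) t)
    (ε : ℝ) (m u v : SF r k) (t : ℝ) :
    HasDerivAt (fun s => sigmaE ε (fderiv ℝ (φ s) m u) (fderiv ℝ (φ s) m v))
      (fderiv ℝ (fderiv ℝ J) (φ t m) (fderiv ℝ (φ t) m u) (0, v.2)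
        - fderiv ℝ (fderiv ℝ J) (φ t m) (fderiv ℝ (φ t) m v) (0, u.2)) t := by
  have hslow := snd_fderiv_flow (hφ.differentiable two_ne_zero) hφ0 hflow
  have hvar : ∀ w, HasDerivAt (fun s => fderiv ℝ (φ s) m w)
      (fastHamVec (fderiv ℝ (fderiv ℝ J) (φ t m) (fderiv ℝ (φ t) m w))) t := fun w => by
    simpa [(hasFDerivAt_fastVF hJ _).fderiv] using hasDerivAt_fderiv_flow hφ
      (fun x => (hasFDerivAt_fastVF hJ x).differentiableAt) hflow t m w
  have hsymm : ∀ a b, fderiv ℝ (fderiv ℝ J) (φ t m) a b = fderiv ℝ (fderiv ℝ J) (φ t m) b a :=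
    (hJ.contDiffAt.isSymmSndFDerivAt (by simp [minSmoothness_of_isRCLikeNormedField]))
  have key := apply_fst_sub_apply_fst_of_symm hsymm (fderiv ℝ (φ t) m u) (fderiv ℝ (φ t) m v)
  simp only [sigmaE, hslow] at key ⊢
  refine (((hvar u).sigma0 (hvar v)).add_const ((1 / ε) * sigma1 u.2 v.2)).congr_deriv ?_
  rw [sigma0_comm, sigma0_fastHamVec, sigma0_fastHamVec, ← key]
  ring

theorem fderiv_d1FormL_flow_apply (hφ : Differentiable ℝ (fun p : ℝ × SF r k => φ p.1 p.2))
    (hJ : ContDiff ℝ 2 J) (t : ℝ) (m u v : SF r k) :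
    fderiv ℝ (fun m => d1FormL J (φ t m)) m u v
      = fderiv ℝ (fderiv ℝ J) (φ t m) (fderiv ℝ (φ t) m u) (0, v.2) := by
  have hφt : HasFDerivAt (φ t) (fderiv ℝ (φ t) m) m :=
    ((hφ (t, m)).comp m ((differentiableAt_const t).prodMk differentiableAt_id)).hasFDerivAt
  have hd1 : HasFDerivAt (fun x => d1FormL J x) _ (φ t m) :=
    (((hJ.fderiv_right (m := 1) le_rfl).differentiable one_ne_zero)
      (φ t m)).hasFDerivAt.clm_comp (hasFDerivAt_const _ _)
  have h : HasFDerivAt (fun m => d1FormL J (φ t m)) _ m := hd1.comp m hφt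
  rw [h.fderiv]
  simp

theorem ThetaL_eq_integral_d1FormL (hslow : ∀ t m w, (fderiv ℝ (φ t) m w).2 = w.2) :
    ThetaL φ J = fun m => (1 / (2 * π)) • ∫ t in (0:ℝ)..(2 * π), (t - π) • d1FormL J (φ t m) := by
  funext m
  have h : ∀ t, (d1FormL J (φ t m)).comp (fderiv ℝ (φ t) m) = d1FormL J (φ t m) := fun t =>
    ContinuousLinearMap.ext fun w => by simp [d1FormL, hslow]
  simp only [ThetaL, h]

theorem fderiv_ThetaL_apply (hφ : ContDiff ℝ 1 (fun p : ℝ × SF r k => φ p.1 p.2))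
    (hJ : ContDiff ℝ 2 J) (hslow : ∀ t m w, (fderiv ℝ (φ t) m w).2 = w.2) (m u v : SF r k) :
    fderiv ℝ (ThetaL φ J) m u v = (1 / (2 * π)) * ∫ t in (0:ℝ)..(2 * π),
      (t - π) * fderiv ℝ (fderiv ℝ J) (φ t m) (fderiv ℝ (φ t) m u) (0, v.2) := by
  have hd1 : ContDiff ℝ 1 (fun x => d1FormL J x) :=
    (hJ.fderiv_right (m := 1) le_rfl).clm_comp contDiff_const
  set G : ℝ → SF r k → SF r k →L[ℝ] ℝ := fun t m => (t - π) • d1FormL J (φ t m)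
  have hG : ContDiff ℝ 1 (fun p : ℝ × SF r k => G p.1 p.2) :=
    (contDiff_fst.sub contDiff_const).smul (hd1.comp hφ)
  have hint : IntervalIntegrable (fun t => fderiv ℝ (G t) m u) volume 0 (2 * π) :=
    (((continuous_fderiv_of_contDiff_uncurry hG).comp (continuous_id.prodMk continuous_const)
      ).clm_apply continuous_const).intervalIntegrable _ _
  have hGt : ∀ t, DifferentiableAt ℝ (fun m => d1FormL J (φ t m)) m := fun t =>
    (hd1.differentiable one_ne_zero _).comp m
      ((hφ.differentiable one_ne_zero _).comp m
        ((differentiableAt_const t).prodMk differentiableAt_id))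
  rw [ThetaL_eq_integral_d1FormL hslow,
    fderiv_fun_const_smul
      (hasFDerivAt_intervalIntegral_of_contDiff hG 0 (2 * π) m).differentiableAt,
    smul_apply, smul_apply, smul_eq_mul,
    fderiv_intervalIntegral_apply_of_contDiff hG, ContinuousLinearMap.intervalIntegral_apply hint]
  congr 1
  refine intervalIntegral.integral_congr fun t _ => ?_
  simp only [G, fderiv_fun_const_smul (hGt t), smul_apply, smul_eq_mul,
    fderiv_d1FormL_flow_apply (hφ.differentiable one_ne_zero) hJ]

theorem continuous_hessian_fderiv_flow (hφ : ContDiff ℝ 1 (fun p : ℝ × SF r k => φ p.1 p.2))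
    (hJ : ContDiff ℝ 2 J) (m w c : SF r k) :
    Continuous (fun t => fderiv ℝ (fderiv ℝ J) (φ t m) (fderiv ℝ (φ t) m w) c) := by
  have hB : Continuous (fderiv ℝ (fderiv ℝ J)) :=
    (hJ.fderiv_right (m := 1) le_rfl).continuous_fderiv one_ne_zero
  have hA : Continuous fun t => fderiv ℝ (φ t) m :=
    (continuous_fderiv_of_contDiff_uncurry (G := φ) hφ).comp (continuous_id.prodMk continuous_const)
  exact ((hB.comp (hφ.continuous.comp (continuous_id.prodMk continuous_const))).clm_apply
    (hA.clm_apply continuous_const)).clm_apply continuous_const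

end SlowFastFlow

theorem stmt11_general {r k : ℕ} (H : SF r k → ℝ)
    (ω : SF r k → ℝ)
    (φ : ℝ → SF r k → SF r k)
    (hφ_smooth : ContDiff ℝ (⊤ : ℕ∞) (fun p : ℝ × SF r k => φ p.1 p.2))
    (hφ0 : ∀ m, φ 0 m = m)
    (hφ' : ∀ t m, HasDerivAt (fun s => φ s m) ((ω (φ t m))⁻¹ • fastVF H (φ t m)) t)
    (hper : ∀ t m, φ (t + 2 * π) m = φ t m)
    (J : SF r k → ℝ) (hJ_smooth : ContDiff ℝ (⊤ : ℕ∞) J)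
    (hH2 : ∀ m (u : Fast r),
      fderiv ℝ J m (u, (0 : Slow k)) = (1 / ω m) * fderiv ℝ H m (u, 0)) :
    ∀ ε : ℝ, ε ≠ 0 → ∀ m u v,
      avg2 φ (fun _ => sigmaE ε) m u v =
        sigmaE ε u v -
          (fderiv ℝ (ThetaL φ J) m u v - fderiv ℝ (ThetaL φ J) m v u) := by
  intro ε _ m u v
  have hφ2 : ContDiff ℝ 2 (fun p : ℝ × SF r k => φ p.1 p.2) :=
    hφ_smooth.of_le (WithTop.coe_le_coe.mpr le_top)
  have hJ2 : ContDiff ℝ 2 J := hJ_smooth.of_le (WithTop.coe_le_coe.mpr le_top)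
  have hflow : ∀ t m, HasDerivAt (fun s => φ s m) (fastVF J (φ t m)) t := fun t m =>
    inv_smul_fastVF_eq_fastVF hH2 (φ t m) ▸ hφ' t m
  have hslow := snd_fderiv_flow (hφ2.differentiable two_ne_zero) hφ0 hflow
  have hφ1 : ContDiff ℝ 1 (fun p : ℝ × SF r k => φ p.1 p.2) := hφ2.of_le one_le_two
  have hB := continuous_hessian_fderiv_flow hφ1 hJ2 m
  have hint : ∀ w c, IntervalIntegrable
      (fun t => (t - π) * fderiv ℝ (fderiv ℝ J) (φ t m) (fderiv ℝ (φ t) m w) c) volume 0 (2 * π) :=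
    fun w c => ((continuous_id.sub continuous_const).mul (hB w c)).intervalIntegrable _ _
  have hid0 : φ 0 = id := funext hφ0
  have hid2π : φ (2 * π) = id := funext fun x => by simpa [hφ0] using hper 0 x
  rw [avg2, integral_eq_sub_integral_mul_deriv_of_eq
      (hasDerivAt_sigmaE_fderiv_flow hφ2 hJ2 hφ0 hflow ε m u v) ((hB u _).sub (hB v _))
      (by rw [hid0, hid2π]),
    fderiv_ThetaL_apply hφ1 hJ2 hslow, fderiv_ThetaL_apply hφ1 hJ2 hslow, ← mul_sub,
    ← intervalIntegral.integral_sub (hint u _) (hint v _), hid0, fderiv_id,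
    show ((0 : ℝ) + 2 * π) / 2 = π by ring]
  simp only [ContinuousLinearMap.id_apply, mul_sub]
  field_simp
  ring

/-- Under hypotheses (H1)-(H3), with `Θ = S(d₁J)`, the average of
the singular symplectic form `σ_ε` along the flow satisfies
`⟨σ_ε⟩ = σ_ε − dΘ` for every `ε ≠ 0`. -/
theorem stmt11 {r k : ℕ} (H : SF r k → ℝ) (hH : ContDiff ℝ (⊤ : ℕ∞) H)
    (ω : SF r k → ℝ) (hω_smooth : ContDiff ℝ (⊤ : ℕ∞) ω) (hω_pos : ∀ m, 0 < ω m)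
    (φ : ℝ → SF r k → SF r k)
    (hφ_smooth : ContDiff ℝ (⊤ : ℕ∞) (fun p : ℝ × SF r k => φ p.1 p.2))
    (hφ0 : ∀ m, φ 0 m = m)
    (hφ' : ∀ t m, HasDerivAt (fun s => φ s m) ((ω (φ t m))⁻¹ • fastVF H (φ t m)) t)
    (hper : ∀ t m, φ (t + 2 * π) m = φ t m)
    (J : SF r k → ℝ) (hJ_smooth : ContDiff ℝ (⊤ : ℕ∞) J)
    (hH2 : ∀ m (u : Fast r),
      fderiv ℝ J m (u, (0 : Slow k)) = (1 / ω m) * fderiv ℝ H m (u, 0))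
    (hH3 : ∀ m w, avg1 φ (d1Form J) m w = 0) :
    ∀ ε : ℝ, ε ≠ 0 → ∀ m u v,
      avg2 φ (fun _ => sigmaE ε) m u v =
        sigmaE ε u v -
          (fderiv ℝ (ThetaL φ J) m u v - fderiv ℝ (ThetaL φ J) m v u) :=
  stmt11_general H ω φ hφ_smooth hφ0 hφ' hper J hJ_smooth hH2
end
end
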